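/- Let M be a binary matroid, B a basis, b, b' distinct elements of B, and x ∉ B with b, b' ∈ C(x,B). If y ∉ B, y ≠ x, and y ∉ cl(B - b) and y ∉ cl(B - b'), then y ∈ cl((B \ {b,b'}) + x). -/

import Mathlib

open Set

variable {α : Type*}

/-- A circuit: a minimal dependent set. -/
def IsCircuit (M : Matroid α) (C : Set α) : Prop :=
  M.Dep C ∧ ∀ D, D ⊂ C → M.Indep D

/-- `C` is the fundamental circuit of `x` with respect to the basis `B`:
the unique circuit contained in `B ∪ {x}`. -/
def IsFundCct (M : Matroid α) (C : Set α) (x : α) (B : Set α) : Prop :=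
  IsCircuit M C ∧ x ∈ C ∧ C ⊆ insert x B

/-- `SymEx M a A B` : the elements `b ∈ B` such that `A - a + b` and `B - b + a` are bases. -/
def SymEx (M : Matroid α) (a : α) (A B : Set α) : Set α :=
  {b ∈ B | M.IsBase (insert b (A \ {a})) ∧ M.IsBase (insert a (B \ {b}))}

/-- `ConnEx M a a' A B` : the elements `b ∈ B` such that `A - a' + b` and `B - b + a` are bases. -/
def ConnEx (M : Matroid α) (a a' : α) (A B : Set α) : Set α :=
  {b ∈ B | M.IsBase (insert b (A \ {a'})) ∧ M.IsBase (insert a (B \ {b}))}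

/-- A binary matroid, via the circuit characterization: the symmetric difference of
any two distinct circuits contains a circuit. -/
def Binary (M : Matroid α) : Prop :=
  ∀ C₁ C₂, IsCircuit M C₁ → IsCircuit M C₂ → C₁ ≠ C₂ →
    ∃ C, IsCircuit M C ∧ C ⊆ symmDiff C₁ C₂

/-- A hyperplane: a maximal proper flat. -/
def IsHyperplane (M : Matroid α) (H : Set α) : Prop :=
  M.IsFlat H ∧ H ≠ M.E ∧ ∀ F, M.IsFlat F → H ⊂ F → F = M.E

/-! Let `Cy` be the fundamental circuit of `y`. Since `y ∉ cl(B - b)`, `b ∈ Cy`, and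
likewise `b' ∈ Cy`. By binarity `Cx ∆ Cy` contains a circuit `C`. If `y ∉ C`, then `C ⊆ B + x`,
so `C = Cx` by uniqueness of fundamental circuits, which is absurd as `b ∈ Cx ∩ Cy`. Hence
`y ∈ cl(C - y)`, and `C - y` avoids `b, b'` (which lie in `Cx ∩ Cy`), so
`C - y ⊆ (B \ {b, b'}) + x`. -/

section

variable {M : Matroid α} {C C₁ C₂ Cx Cy I : Set α} {e f x y : α}

theorem isCircuit_iff_matroid_isCircuit : IsCircuit M C ↔ M.IsCircuit C := by
  refine ⟨fun ⟨hC, hmin⟩ ↦ Matroid.isCircuit_iff.2 ⟨hC, fun D hD hDC ↦ ?_⟩,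
    fun hC ↦ ⟨hC.dep, fun D hDC ↦ hC.ssubset_indep hDC⟩⟩
  by_contra hne
  exact hD.not_indep (hmin D (ssubset_of_subset_of_ne hDC hne))

theorem Binary.exists_isCircuit_subset_symmDiff (hM : Binary M) (hC₁ : M.IsCircuit C₁)
    (hC₂ : M.IsCircuit C₂) (hne : C₁ ≠ C₂) : ∃ C, M.IsCircuit C ∧ C ⊆ symmDiff C₁ C₂ := by
  rw [← isCircuit_iff_matroid_isCircuit] at hC₁ hC₂
  simpa only [isCircuit_iff_matroid_isCircuit] using hM C₁ C₂ hC₁ hC₂ hne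

theorem Matroid.IsCircuit.mem_of_notMem_closure_sdiff_singleton (hC : M.IsCircuit C)
    (heC : e ∈ C) (hCI : C ⊆ insert e I) (he : e ∉ M.closure (I \ {f})) : f ∈ C := by
  by_contra hf
  have hsub : C \ {e} ⊆ I \ {f} := by
    rintro z ⟨hzC, hze⟩
    exact ⟨(hCI hzC).resolve_left hze, by rintro rfl; exact hf hzC⟩
  exact he (M.closure_subset_closure hsub (hC.mem_closure_sdiff_singleton_of_mem heC))

theorem Binary.exists_isCircuit_mem_subset_symmDiff (hM : Binary M) (hI : M.Indep I)
    (hCx : M.IsCircuit Cx) (hCxI : Cx ⊆ insert x I)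
    (hCy : M.IsCircuit Cy) (hyCy : y ∈ Cy) (hCyI : Cy ⊆ insert y I)
    (hy : y ∉ insert x I) (hmeet : (Cx ∩ Cy).Nonempty) :
    ∃ C, M.IsCircuit C ∧ y ∈ C ∧ C ⊆ symmDiff Cx Cy := by
  have hne : Cx ≠ Cy := fun h ↦ hy (hCxI (h ▸ hyCy))
  obtain ⟨C, hC, hCs⟩ := hM.exists_isCircuit_subset_symmDiff hCx hCy hne
  refine ⟨C, hC, by_contra fun hyC ↦ ?_, hCs⟩
  have hCxC : C ⊆ insert x I := fun z hz ↦ by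
    rcases mem_symmDiff.1 (hCs hz) with ⟨hzx, -⟩ | ⟨hzy, -⟩
    · exact hCxI hzx
    · exact .inr ((hCyI hzy).resolve_left (by rintro rfl; exact hyC hz))
  have hCeq : C = Cx :=
    (hC.eq_fundCircuit_of_subset hI hCxC).trans (hCx.eq_fundCircuit_of_subset hI hCxI).symm
  obtain ⟨z, hzx, hzy⟩ := hmeet
  rcases mem_symmDiff.1 (hCs (hCeq ▸ hzx)) with ⟨-, hzy'⟩ | ⟨-, hzx'⟩
  · exact hzy' hzy
  · exact hzx' hzx

end

theorem stmt_18_general (M : Matroid α) {B Cx : Set α} {b b' x y : α}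
    (hM : Binary M) (hB : M.IsBase B)
    (hCx : IsFundCct M Cx x B) (hbx : b ∈ Cx) (hb'x : b' ∈ Cx)
    (hyE : y ∈ M.E) (hy : y ∉ B) (hyx : y ≠ x)
    (hy1 : y ∉ M.closure (B \ {b})) (hy2 : y ∉ M.closure (B \ {b'})) :
    y ∈ M.closure (insert x (B \ {b, b'})) := by
  obtain ⟨hCx, -, hCxB⟩ := hCx
  rw [isCircuit_iff_matroid_isCircuit] at hCx
  have hCy := hB.fundCircuit_isCircuit hyE hy
  have hCyB := M.fundCircuit_subset_insert y B
  have hyCy := M.mem_fundCircuit y B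
  have hbCy := hCy.mem_of_notMem_closure_sdiff_singleton hyCy hCyB hy1
  have hb'Cy := hCy.mem_of_notMem_closure_sdiff_singleton hyCy hCyB hy2
  obtain ⟨C, hC, hyC, hCs⟩ := hM.exists_isCircuit_mem_subset_symmDiff hB.indep hCx hCxB hCy
    hyCy hCyB (by simp [hy, hyx]) ⟨b, hbx, hbCy⟩
  refine M.closure_subset_closure ?_ (hC.mem_closure_sdiff_singleton_of_mem hyC)
  rintro z ⟨hzC, hzy⟩
  rcases mem_symmDiff.1 (hCs hzC) with ⟨hzCx, hzCy⟩ | ⟨hzCy, hzCx⟩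
  · rcases hCxB hzCx with rfl | hzB
    · exact mem_insert _ _
    · exact .inr ⟨hzB, by rintro (rfl | rfl) <;> contradiction⟩
  · have hzB := (hCyB hzCy).resolve_left hzy
    exact .inr ⟨hzB, by rintro (rfl | rfl) <;> contradiction⟩

theorem stmt_18 (M : Matroid α) [M.Finite] {B Cx : Set α} {b b' x y : α}
    (hM : Binary M) (hB : M.IsBase B)
    (hbB : b ∈ B) (hb'B : b' ∈ B) (hbb' : b ≠ b')
    (hx : x ∉ B) (hCx : IsFundCct M Cx x B) (hbx : b ∈ Cx) (hb'x : b' ∈ Cx)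
    (hyE : y ∈ M.E) (hy : y ∉ B) (hyx : y ≠ x)
    (hy1 : y ∉ M.closure (B \ {b})) (hy2 : y ∉ M.closure (B \ {b'})) :
    y ∈ M.closure (insert x (B \ {b, b'})) :=
  stmt_18_general M hM hB hCx hbx hb'x hyE hy hyx hy1 hy2
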